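/- Let E = {η_i, ρ_i}_{i=0}^{1} be a two-state bipartite ensemble and define q_G(E) = ½ + ½ Tr|η₀ρ₀^PT − η₁ρ₁^PT|. For the parity-coarse-grained L-fold ensemble E^(L) with states ρ_i^(L) = (1/η_i^(L)) Σ_{c ∈ {0,1}^L, parity(c)=i} η_c ρ_c and probabilities η_i^(L) = Σ_{parity(c)=i} η_c (where η_c = Π η_{c_l}, ρ_c = ⊗ ρ_{c_l}), one has q_G(E^(L)) = ½ + ½ (2 q_G(E) − 1)^L. -/

import Mathlib

/-!
Expanding `(s₀ G₀ ± s₁ G₁)^{⊗L}` over strings `c ∈ {0,1}^L`, the sign `(-1)^{|c|}` separates the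
two parity classes, so `B₀ + B₁ = (η₀ρ₀ᴾᵀ + η₁ρ₁ᴾᵀ)^{⊗L}` has trace `1` and
`B₀ - B₁ = D^{⊗L}` with `D = η₀ρ₀ᴾᵀ - η₁ρ₁ᴾᵀ`. For any two-outcome measurement,
`∑ tr(Bᵢ Mᵢ) = tr B₁ + tr((B₀ - B₁) M₀)`, and writing `B₀ - B₁ = Δ⁺ - Δ⁻` this is at most
`tr B₁ + tr Δ⁺ = (tr(B₀ + B₁) + tr|B₀ - B₁|) / 2`, with equality for `M₀` the projector onto the
positive spectral subspace of `B₀ - B₁` (Helstrom). Finally `|D^{⊗L}| = |D|^{⊗L}`, because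
`|D|^{⊗L}` is a positive square root of `(D^{⊗L})ᴴ D^{⊗L}`, so `tr|B₀ - B₁| = (2q - 1)^L`.
-/

open Matrix BigOperators Finset
open scoped ComplexOrder

noncomputable def matAbs {d : Type*} [Fintype d] [DecidableEq d] (E : Matrix d d ℂ) : Matrix d d ℂ :=
  (Matrix.posSemidef_conjTranspose_mul_self E).1.eigenvectorUnitary.1 *
    Matrix.diagonal ((↑) ∘ (√·) ∘ (Matrix.posSemidef_conjTranspose_mul_self E).1.eigenvalues) *
    (star (Matrix.posSemidef_conjTranspose_mul_self E).1.eigenvectorUnitary : Matrix d d ℂ)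

noncomputable def tpow {d : Type*} (E : Matrix d d ℂ) (L : ℕ) :
    Matrix (Fin L → d) (Fin L → d) ℂ :=
  Matrix.of fun i j => ∏ l, E (i l) (j l)

noncomputable def tfam {d : Type*} {L : ℕ} (A : Fin L → Matrix d d ℂ) :
    Matrix (Fin L → d) (Fin L → d) ℂ :=
  Matrix.of fun i j => ∏ l, A l (i l) (j l)

def pt {a b : Type*} (M : Matrix (a × b) (a × b) ℂ) : Matrix (a × b) (a × b) ℂ :=
  Matrix.of fun x y => M (x.1, y.2) (y.1, x.2)

open scoped MatrixOrder in
lemma matAbs_eq_abs {n : Type*} [Fintype n] [DecidableEq n] (E : Matrix n n ℂ) :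
    matAbs E = CFC.abs E := by
  have hE := posSemidef_conjTranspose_mul_self E
  rw [CFC.abs, star_eq_conjTranspose, CFC.sqrt_eq_cfc, cfc_nnreal_eq_real _ _ hE.nonneg,
    hE.1.cfc_eq, IsHermitian.cfc, Unitary.conjStarAlgAut_apply, matAbs]
  congr 3
  funext i
  simp [Real.coe_sqrt, Real.coe_toNNReal', max_eq_left (hE.eigenvalues_nonneg i)]

open scoped MatrixOrder in
lemma trace_matAbs_eq_ofReal_re {n : Type*} [Fintype n] [DecidableEq n] (E : Matrix n n ℂ) :
    (matAbs E).trace = ((matAbs E).trace.re : ℂ) := by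
  have hE : 0 ≤ matAbs E := matAbs_eq_abs E ▸ CFC.abs_nonneg E
  exact Complex.eq_re_of_ofReal_le (r := 0)
    (by simpa using (nonneg_iff_posSemidef.mp hE).trace_nonneg)

namespace Matrix

lemma trace_pt {a b : Type*} [Fintype a] [Fintype b] (M : Matrix (a × b) (a × b) ℂ) :
    (pt M).trace = M.trace := by
  simp [trace, pt]

lemma IsHermitian.pt {a b : Type*} {M : Matrix (a × b) (a × b) ℂ} (h : M.IsHermitian) :
    (pt M).IsHermitian := by
  ext x y
  simp only [conjTranspose_apply, _root_.pt, of_apply]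
  rw [← conjTranspose_apply, h]

section Helstrom

open scoped MatrixOrder

variable {n : Type*} [Fintype n] [DecidableEq n]

lemma trace_mul_nonneg {A B : Matrix n n ℂ} (hA : 0 ≤ A) (hB : 0 ≤ B) : 0 ≤ (A * B).trace := by
  obtain ⟨C, rfl⟩ := CStarAlgebra.nonneg_iff_eq_star_mul_self.mp hB
  rw [← Matrix.mul_assoc, trace_mul_cycle]
  have : 0 ≤ C * A * star C := by simpa using star_left_conjugate_nonneg hA (star C)
  exact (Matrix.nonneg_iff_posSemidef.mp this).trace_nonneg

noncomputable def posProj (Δ : Matrix n n ℂ) : Matrix n n ℂ :=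
  cfc (fun x : ℝ => if 0 < x then (1 : ℝ) else 0) Δ

lemma posProj_nonneg (Δ : Matrix n n ℂ) : 0 ≤ posProj Δ :=
  cfc_nonneg fun x _ => by split_ifs <;> norm_num

lemma posProj_le_one (Δ : Matrix n n ℂ) : posProj Δ ≤ 1 :=
  cfc_le_one _ _ fun x _ => by split_ifs <;> norm_num

lemma mul_posProj {Δ : Matrix n n ℂ} (hΔ : IsSelfAdjoint Δ) : Δ * posProj Δ = Δ⁺ := by
  have hcont : ContinuousOn (fun x : ℝ => if 0 < x then (1 : ℝ) else 0) (spectrum ℝ Δ) :=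
    Δ.finite_real_spectrum.continuousOn _
  conv_lhs => arg 1; rw [← cfc_id' ℝ Δ]
  rw [posProj, ← cfc_mul .., CFC.posPart_def, cfcₙ_eq_cfc]
  refine cfc_congr fun x _ => ?_
  simp only [posPart_def]
  split_ifs with hx
  · simp [hx.le]
  · simp [not_lt.mp hx]

lemma trace_mul_le_trace_posPart {Δ M : Matrix n n ℂ} (hΔ : IsSelfAdjoint Δ) (hM₀ : 0 ≤ M)
    (hM₁ : M ≤ 1) : (Δ * M).trace ≤ (Δ⁺).trace :=
  calc (Δ * M).trace = (Δ⁺ * M).trace - (Δ⁻ * M).trace := by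
        rw [← trace_sub, ← Matrix.sub_mul, CFC.posPart_sub_negPart Δ]
    _ ≤ (Δ⁺ * M).trace := sub_le_self _ (trace_mul_nonneg (CFC.negPart_nonneg Δ) hM₀)
    _ ≤ (Δ⁺ * M).trace + (Δ⁺ * (1 - M)).trace :=
        le_add_of_nonneg_right (trace_mul_nonneg (CFC.posPart_nonneg Δ) (sub_nonneg.mpr hM₁))
    _ = (Δ⁺).trace := by rw [← trace_add, ← Matrix.mul_add, add_sub_cancel, Matrix.mul_one]

lemma two_mul_trace_posPart {Δ : Matrix n n ℂ} (hΔ : IsSelfAdjoint Δ) :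
    2 * (Δ⁺).trace = (CFC.abs Δ).trace + Δ.trace := by
  rw [← trace_add, CFC.abs_add_self Δ, trace_smul, two_smul, two_mul]

def measurementValues (B : Fin 2 → Matrix n n ℂ) : Set ℝ :=
  {x : ℝ | ∃ M : Fin 2 → Matrix n n ℂ,
    (∀ i, (M i).PosSemidef) ∧ ∑ i, M i = 1 ∧ x = (∑ i, ((B i) * M i).trace).re}

lemma sum_trace_mul_of_sum_eq_one (B M : Fin 2 → Matrix n n ℂ) (hM : ∑ i, M i = 1) :
    ∑ i, ((B i) * M i).trace = (B 1).trace + ((B 0 - B 1) * M 0).trace := by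
  rw [Fin.sum_univ_two] at hM ⊢
  rw [eq_sub_of_add_eq' hM, Matrix.sub_mul, Matrix.mul_sub, Matrix.mul_one, trace_sub, trace_sub]
  ring

theorem isGreatest_measurementValues {B : Fin 2 → Matrix n n ℂ}
    (hB : (B 0 - B 1).IsHermitian) :
    IsGreatest (measurementValues B)
      ((((B 0 + B 1).trace).re + ((matAbs (B 0 - B 1)).trace).re) / 2) := by
  set Δ := B 0 - B 1
  have hΔ : IsSelfAdjoint Δ := hB
  have hvalue : (((B 0 + B 1).trace).re + ((matAbs Δ).trace).re) / 2 =
      ((B 1).trace + (Δ⁺).trace).re := by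
    have h := congrArg Complex.re (two_mul_trace_posPart hΔ)
    simp only [Complex.mul_re, Complex.add_re, Complex.re_ofNat, Complex.im_ofNat, zero_mul,
      sub_zero, ← matAbs_eq_abs, Δ, trace_sub, Complex.sub_re] at h
    simp only [trace_add, Complex.add_re]
    linarith
  rw [hvalue]
  constructor
  · refine ⟨![posProj Δ, 1 - posProj Δ], ?_, by simp, ?_⟩
    · intro i
      fin_cases i
      · exact Matrix.nonneg_iff_posSemidef.mp (posProj_nonneg Δ)
      · exact Matrix.nonneg_iff_posSemidef.mp (sub_nonneg.mpr (posProj_le_one Δ))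
    · rw [sum_trace_mul_of_sum_eq_one _ _ (by simp)]
      simp only [Matrix.cons_val_zero, Complex.add_re, add_right_inj]
      exact congrArg (fun X => X.trace.re) (mul_posProj hΔ).symm
  · rintro x ⟨M, hM, hMsum, rfl⟩
    simp only [sum_trace_mul_of_sum_eq_one B M hMsum, Complex.add_re, add_le_add_iff_left]
    have hM₁ : M 0 ≤ 1 := by
      rw [← hMsum, Fin.sum_univ_two, le_add_iff_nonneg_right]
      exact (hM 1).nonneg
    exact Complex.re_le_re (trace_mul_le_trace_posPart hΔ (hM 0).nonneg hM₁)

end Helstrom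

section TensorPower

open scoped MatrixOrder

variable {d : Type*}

lemma conjTranspose_tpow (E : Matrix d d ℂ) (L : ℕ) : (tpow E L)ᴴ = tpow Eᴴ L := by
  ext i j
  simp [tpow]

lemma tpow_mul_tpow [Fintype d] (E F : Matrix d d ℂ) (L : ℕ) :
    tpow E L * tpow F L = tpow (E * F) L := by
  ext i j
  simp only [tpow, mul_apply, of_apply, prod_univ_sum, Fintype.piFinset_univ, prod_mul_distrib]

lemma trace_tpow [Fintype d] (E : Matrix d d ℂ) (L : ℕ) : (tpow E L).trace = E.trace ^ L := by
  simp only [trace, diag, tpow, of_apply]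
  rw [← Fintype.piFinset_univ, sum_prod_piFinset univ (fun _ m => E m m), prod_const, card_univ,
    Fintype.card_fin]

lemma IsHermitian.tpow {E : Matrix d d ℂ} (hE : E.IsHermitian) (L : ℕ) :
    (tpow E L).IsHermitian := by
  rw [IsHermitian, conjTranspose_tpow, hE]

lemma tpow_nonneg [Fintype d] [DecidableEq d] {E : Matrix d d ℂ} (hE : 0 ≤ E) (L : ℕ) :
    0 ≤ tpow E L := by
  obtain ⟨C, rfl⟩ := CStarAlgebra.nonneg_iff_eq_star_mul_self.mp hE
  rw [star_eq_conjTranspose, ← tpow_mul_tpow, ← conjTranspose_tpow, ← star_eq_conjTranspose]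
  exact star_mul_self_nonneg _

lemma matAbs_tpow [Fintype d] [DecidableEq d] (E : Matrix d d ℂ) (L : ℕ) :
    matAbs (tpow E L) = tpow (matAbs E) L := by
  rw [matAbs_eq_abs, matAbs_eq_abs, CFC.abs,
    CFC.sqrt_eq_iff _ _ (star_mul_self_nonneg _) (tpow_nonneg (CFC.abs_nonneg E) L),
    tpow_mul_tpow, CFC.abs_mul_abs, star_eq_conjTranspose, star_eq_conjTranspose,
    conjTranspose_tpow, tpow_mul_tpow]

lemma tpow_sum_smul {ι : Type*} [Fintype ι] (s : ι → ℂ) (G : ι → Matrix d d ℂ) (L : ℕ) :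
    tpow (∑ k, s k • G k) L = ∑ c : Fin L → ι, (∏ l, s (c l)) • tfam (fun l => G (c l)) := by
  ext i j
  simp only [tpow, tfam, of_apply, Matrix.sum_apply, Matrix.smul_apply, smul_eq_mul,
    prod_univ_sum, Fintype.piFinset_univ, prod_mul_distrib]

noncomputable def parityPart (s : Fin 2 → ℂ) (G : Fin 2 → Matrix d d ℂ) (L : ℕ) (i : Fin 2) :
    Matrix (Fin L → d) (Fin L → d) ℂ :=
  ∑ c ∈ univ.filter (fun c : Fin L → Fin 2 => (∑ l, (c l).val) % 2 = (i : ℕ)),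
    (∏ l, s (c l)) • tfam (fun l => G (c l))

lemma parityPart_add (s : Fin 2 → ℂ) (G : Fin 2 → Matrix d d ℂ) (L : ℕ) :
    parityPart s G L 0 + parityPart s G L 1 = tpow (∑ k, s k • G k) L := by
  rw [parityPart, parityPart, sum_filter, sum_filter, ← sum_add_distrib, tpow_sum_smul]
  refine sum_congr rfl fun c _ => ?_
  rcases Nat.mod_two_eq_zero_or_one (∑ l, (c l).val) with h | h <;> simp [h]

lemma parityPart_sub (s : Fin 2 → ℂ) (G : Fin 2 → Matrix d d ℂ) (L : ℕ) :
    parityPart s G L 0 - parityPart s G L 1 = tpow (s 0 • G 0 - s 1 • G 1) L := by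
  have hsign : s 0 • G 0 - s 1 • G 1 = ∑ k : Fin 2, ((-1) ^ (k : ℕ) * s k) • G k := by
    simp [Fin.sum_univ_two, sub_eq_add_neg]
  rw [hsign, parityPart, parityPart, sum_filter, sum_filter, ← sum_sub_distrib, tpow_sum_smul]
  refine sum_congr rfl fun c _ => ?_
  rw [prod_mul_distrib, prod_pow_eq_pow_sum, neg_one_pow_eq_pow_mod_two]
  rcases Nat.mod_two_eq_zero_or_one (∑ l, (c l).val) with h | h <;> simp [h]

end TensorPower

end Matrix

theorem stmt_8_general {a b : Type*} [Fintype a] [DecidableEq a] [Fintype b] [DecidableEq b]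
    (η : Fin 2 → ℝ) (ρ : Fin 2 → Matrix (a × b) (a × b) ℂ)
    (hηsum : ∑ i, η i = 1)
    (hρ : ∀ i, (ρ i).PosSemidef) (hρtr : ∀ i, (ρ i).trace = 1)
    (L : ℕ)
    (q : ℝ)
    (hq : q = 1 / 2 + 1 / 2 * ((matAbs ((η 0 : ℂ) • pt (ρ 0) - (η 1 : ℂ) • pt (ρ 1))).trace).re)
    (B : Fin 2 → Matrix (Fin L → a × b) (Fin L → a × b) ℂ)
    (hB : ∀ i, B i =
      ∑ c ∈ Finset.univ.filter (fun c : Fin L → Fin 2 => (∑ l, (c l).val) % 2 = (i : ℕ)),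
        ((∏ l, η (c l) : ℝ) : ℂ) • tfam (fun l => pt (ρ (c l)))) :
    IsGreatest {x : ℝ | ∃ M : Fin 2 → Matrix (Fin L → a × b) (Fin L → a × b) ℂ,
        (∀ i, (M i).PosSemidef) ∧ ∑ i, M i = 1 ∧ x = (∑ i, ((B i) * M i).trace).re}
      (1 / 2 + 1 / 2 * (2 * q - 1) ^ L) := by
  set D := (η 0 : ℂ) • pt (ρ 0) - (η 1 : ℂ) • pt (ρ 1)
  have hB' : B = parityPart (fun k => (η k : ℂ)) (fun k => pt (ρ k)) L := by
    ext1 i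
    rw [hB i, parityPart]
    push_cast
    rfl
  have hsum : B 0 + B 1 = tpow (∑ k, (η k : ℂ) • pt (ρ k)) L := by rw [hB', parityPart_add]
  have hdiff : B 0 - B 1 = tpow D L := by rw [hB', parityPart_sub]
  have hD : D.IsHermitian :=
    ((hρ 0).isHermitian.pt.smul (Complex.conj_ofReal _)).sub
      ((hρ 1).isHermitian.pt.smul (Complex.conj_ofReal _))
  have hmix : (∑ k, (η k : ℂ) • pt (ρ k)).trace = 1 := by
    simp only [trace_sum, trace_smul, trace_pt, hρtr, smul_eq_mul, mul_one]
    exact_mod_cast hηsum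
  have key := isGreatest_measurementValues (hdiff ▸ hD.tpow L)
  rw [hsum, hdiff, trace_tpow, hmix, matAbs_tpow, trace_tpow, trace_matAbs_eq_ofReal_re,
    ← Complex.ofReal_pow, Complex.ofReal_re, one_pow, Complex.one_re] at key
  have hvalue : 1 / 2 + 1 / 2 * (2 * q - 1) ^ L = (1 + (matAbs D).trace.re ^ L) / 2 := by
    rw [hq]
    ring
  rw [hvalue]
  exact key

/-- `q_G(E^(L)) = ½ + ½ (2 q_G(E) - 1)^L` for a two-state bipartite ensemble,
where the parity-coarse-grained PT operators are `Bᵢ = Σ_{parity(c)=i} η_c ⊗_l ρ_{c_l}^PT`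
(so `Bᵢ = ηᵢ^(L) ρᵢ^(L)PT`), and `q_G` is the optimal value over measurements. -/
theorem stmt_8 {a b : Type*} [Fintype a] [DecidableEq a] [Fintype b] [DecidableEq b]
    (η : Fin 2 → ℝ) (ρ : Fin 2 → Matrix (a × b) (a × b) ℂ)
    (hη : ∀ i, 0 ≤ η i) (hηsum : ∑ i, η i = 1)
    (hρ : ∀ i, (ρ i).PosSemidef) (hρtr : ∀ i, (ρ i).trace = 1)
    (L : ℕ) (hL : 0 < L)
    (q : ℝ)
    (hq : q = 1 / 2 + 1 / 2 * ((matAbs ((η 0 : ℂ) • pt (ρ 0) - (η 1 : ℂ) • pt (ρ 1))).trace).re)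
    (B : Fin 2 → Matrix (Fin L → a × b) (Fin L → a × b) ℂ)
    (hB : ∀ i, B i =
      ∑ c ∈ Finset.univ.filter (fun c : Fin L → Fin 2 => (∑ l, (c l).val) % 2 = (i : ℕ)),
        ((∏ l, η (c l) : ℝ) : ℂ) • tfam (fun l => pt (ρ (c l)))) :
    IsGreatest {x : ℝ | ∃ M : Fin 2 → Matrix (Fin L → a × b) (Fin L → a × b) ℂ,
        (∀ i, (M i).PosSemidef) ∧ ∑ i, M i = 1 ∧ x = (∑ i, ((B i) * M i).trace).re}
      (1 / 2 + 1 / 2 * (2 * q - 1) ^ L) :=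
  stmt_8_general η ρ hηsum hρ hρtr L q hq B hB
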